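/- arXiv:1501.01817 — 2 statements merged into one kernel-verified Lean document; each statement's English description precedes it below -/
import Mathlib

section
/- (Knots have degree 2) Let Q₀ be the rewriting set built from a friendly Thue system Π (rules ①–⑥), in which every lower index l_p, r_p occurs in exactly the two associated rewriting rules for production p. If two red edges H(S,a,b) and H(S',a',b) of C^{Q₀} form a married couple (created by the same rewriting step) with knot b, then b has degree exactly 2 in C^{Q₀}. -/
/-!  S-warms and s-warm rewriting, following Gogacz–Marcinkowski,
"The Hunt for a Red Spider".  Labels are abstract ideal s-piders: a color
(`true` = green, `false` = red) together with an empty-or-singleton upper lame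
index and lower lame index.  An edge `(S, a, b)` of a s-warm is the atom
`H(S, a, b)` with tail `a` and antenna `b`. -/

namespace Swarm

/-- Abstract ideal s-piders `𝔸_s`. -/
abbrev ISp (s : ℕ) := Bool × Option (Fin s) × Option (Fin s)

/-- A labeled edge of a s-warm: label, tail, antenna. -/
abbrev Edge (s : ℕ) (V : Type*) := ISp s × V × V

/-- `x ⊆ y` for empty-or-singleton sets coded as `Option`. -/
def osub {s : ℕ} (x y : Option (Fin s)) : Prop := ∀ i : Fin s, x = some i → y = some i

/-- `y ∖ x` for empty-or-singleton sets coded as `Option` (assuming `x ⊆ y`). -/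
def odiff {s : ℕ} (y x : Option (Fin s)) : Option (Fin s) :=
  match x with | none => y | some _ => none

/-- The action of the s-pider query `f^I_J` (indices `IJ`) on labels:
`f^I_J(S^{I'}_{J'}) = S^{I∖I'}_{J∖J'}` of the opposite color, defined iff
`I' ⊆ I` and `J' ⊆ J`. -/
def LabStep {s : ℕ} (IJ : Option (Fin s) × Option (Fin s)) (p p' : ISp s) : Prop :=
  osub p.2.1 IJ.1 ∧ osub p.2.2 IJ.2 ∧
  p' = (!p.1, odiff IJ.1 p.2.1, odiff IJ.2 p.2.2)

/-- A binary s-pider rewriting rule `f ∧↑ f'` (`wedge = true`: shared antenna)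
or `f ∨↑ f'` (`wedge = false`: shared tail), given by the index pairs of its
two s-pider query components. -/
structure BRule (s : ℕ) where
  wedge : Bool
  f : Option (Fin s) × Option (Fin s)
  f' : Option (Fin s) × Option (Fin s)

/-- The vertices of a s-warm. -/
def verts {s : ℕ} {V : Type*} (D : Set (Edge s V)) : Set V :=
  {v | ∃ e ∈ D, v = e.2.1 ∨ v = e.2.2}

/-- One execution of the rewriting rule `Q` in the s-warm `D`, with input edges
`e1, e2` (same color, sharing antenna resp. tail), creating a fresh vertex and the
two output edges `o1, o2` of the opposite color, provided no witness already
exists; `D'` is the resulting s-warm. -/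
def SwStepAt {s : ℕ} {V : Type*} (Q : BRule s) (D : Set (Edge s V))
    (e1 e2 o1 o2 : Edge s V) (D' : Set (Edge s V)) : Prop :=
  e1 ∈ D ∧ e2 ∈ D ∧ e1.1.1 = e2.1.1 ∧
  LabStep Q.f e1.1 o1.1 ∧ LabStep Q.f' e2.1 o2.1 ∧
  (if Q.wedge then
    e1.2.2 = e2.2.2 ∧ o1.2.1 = e1.2.1 ∧ o2.2.1 = e2.2.1 ∧ o1.2.2 = o2.2.2 ∧
      o1.2.2 ∉ verts D ∧
      ¬ ∃ c, (o1.1, e1.2.1, c) ∈ D ∧ (o2.1, e2.2.1, c) ∈ D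
  else
    e1.2.1 = e2.2.1 ∧ o1.2.2 = e1.2.2 ∧ o2.2.2 = e2.2.2 ∧ o1.2.1 = o2.2.1 ∧
      o1.2.1 ∉ verts D ∧
      ¬ ∃ c, (o1.1, c, e1.2.2) ∈ D ∧ (o2.1, c, e2.2.2) ∈ D) ∧
  D' = D ∪ {o1, o2}

/-- The `ToDo` set of a s-warm: the rule instances that can still be executed. -/
def SwToDo {s : ℕ} {V : Type*} (𝒬 : Set (BRule s)) (D : Set (Edge s V)) :
    Set (BRule s × Edge s V × Edge s V) :=
  {q | q.1 ∈ 𝒬 ∧ ∃ o1 o2 D', SwStepAt q.1 D q.2.1 q.2.2 o1 o2 D'}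

/-- Union of the stages strictly below `i`. -/
def partUnion {X : Type*} (seq : Ordinal.{0} → Set X) (i : Ordinal.{0}) : Set X :=
  ⋃ j ∈ Set.Iio i, seq j

/-- A fair rewriting (chase) sequence for the rule set `𝒬` starting from `D0`. -/
structure SwChase {s : ℕ} {V : Type*} (𝒬 : Set (BRule s)) (D0 : Set (Edge s V)) where
  len : Ordinal.{0}
  pos : 0 < len
  seq : Ordinal.{0} → Set (Edge s V)
  init : seq 0 = D0
  step : ∀ i, 0 < i → i < len →
    ∃ q ∈ SwToDo 𝒬 (partUnion seq i), ∃ o1 o2,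
      SwStepAt q.1 (partUnion seq i) q.2.1 q.2.2 o1 o2 (seq i)
  fair : ∀ i < len, ∀ q ∈ SwToDo 𝒬 (partUnion seq i),
    ∃ k, i < k ∧ k ≤ len ∧ q ∉ SwToDo 𝒬 (partUnion seq k)

/-- The result `chase(𝒬, D0)` of a rewriting sequence. -/
def SwChase.result {s : ℕ} {V : Type*} {𝒬 : Set (BRule s)} {D0 : Set (Edge s V)}
    (C : SwChase 𝒬 D0) : Set (Edge s V) := partUnion C.seq C.len

/-- The green full s-pider label. -/
def greenFull (s : ℕ) : ISp s := (true, none, none)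

/-- The red full s-pider label. -/
def redFull (s : ℕ) : ISp s := (false, none, none)

/-- The initial s-warm `D_{green}`: a single edge labeled with the green full
s-pider. -/
def D0green (s : ℕ) {V : Type*} (s0 t0 : V) : Set (Edge s V) :=
  {((true, none, none), s0, t0)}

end Swarm

namespace Swarm

/-- A friendly Thue system `Π = Π_< ∪ Π_=` over the alphabet `{1,…,s} = Fin s`,
together with the bookkeeping data (fresh lower indices) used to build the
rewriting set `𝒬₀` (rules ①–⑥) and rule ⑦.
`Peq` is the (symmetric) set of productions of `Π_=`, each a pair of two-letter
words `((i,j),(i',j'))`; `Π_<` always consists of `{η₀, β₀η₁}` and `{η₁, β₁η₀}`. -/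
structure Friendly (s : ℕ) where
  α : Fin s
  β0 : Fin s
  η0 : Fin s
  β1 : Fin s
  η1 : Fin s
  γ : Fin s
  γ' : Fin s
  Peq : Set ((Fin s × Fin s) × (Fin s × Fin s))
  /-- the six lower indices of the rules ①–③ -/
  l : Fin 6 → Fin s
  /-- the lower index `l_p` of the rules for production `p` -/
  lp : (Fin s × Fin s) × (Fin s × Fin s) → Fin s
  /-- the lower index `r_p` of the rules for production `p` -/
  rp : (Fin s × Fin s) × (Fin s × Fin s) → Fin s
  /-- the lower index `r` of rule ⑦ -/
  r7 : Fin s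
  hα : Even (α : ℕ)
  hβ0 : Even (β0 : ℕ)
  hη0 : Even (η0 : ℕ)
  hβ1 : Odd (β1 : ℕ)
  hη1 : Odd (η1 : ℕ)
  hγ : Odd (γ : ℕ)
  hγ' : Even (γ' : ℕ)
  /-- `Π_=` is symmetric (productions are unordered pairs) -/
  symm : ∀ p ∈ Peq, (p.2, p.1) ∈ Peq
  /-- parity condition of friendliness -/
  parity : ∀ p ∈ Peq,
    (Odd (p.1.1 : ℕ) ∧ Odd (p.2.1 : ℕ) ∧ Even (p.1.2 : ℕ) ∧ Even (p.2.2 : ℕ)) ∨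
    (Even (p.1.1 : ℕ) ∧ Even (p.2.1 : ℕ) ∧ Odd (p.1.2 : ℕ) ∧ Odd (p.2.2 : ℕ))
  /-- no production of the form `{ij, ij'}` or `{ij, i'j}` -/
  nodup : ∀ p ∈ Peq, p.1.1 ≠ p.2.1 ∧ p.1.2 ≠ p.2.2
  /-- no production involves `α` -/
  noα : ∀ p ∈ Peq, α ≠ p.1.1 ∧ α ≠ p.1.2 ∧ α ≠ p.2.1 ∧ α ≠ p.2.2
  /-- no production of `Π_=` involves `η₀` -/
  noη0 : ∀ p ∈ Peq, η0 ≠ p.1.1 ∧ η0 ≠ p.1.2 ∧ η0 ≠ p.2.1 ∧ η0 ≠ p.2.2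
  /-- no production of `Π_=` involves `η₁` -/
  noη1 : ∀ p ∈ Peq, η1 ≠ p.1.1 ∧ η1 ≠ p.1.2 ∧ η1 ≠ p.2.1 ∧ η1 ≠ p.2.2
  /-- `γ` and `γ'` occur in exactly one production, of the form `{ii', γγ'}` -/
  γprod : ∃ q ∈ Peq, q.2 = (γ, γ') ∧
    ∀ p ∈ Peq,
      (γ = p.1.1 ∨ γ = p.1.2 ∨ γ = p.2.1 ∨ γ = p.2.2 ∨
       γ' = p.1.1 ∨ γ' = p.1.2 ∨ γ' = p.2.1 ∨ γ' = p.2.2) →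
      p = q ∨ p = (q.2, q.1)
  fin : Peq.Finite
  /-- `s > 2|Π|` (with `|Π| = Peq.ncard/2 + 2` unordered productions) -/
  size : Peq.ncard + 4 < s
  linj : Function.Injective l
  lpswap : ∀ p, lp (p.2, p.1) = lp p
  rpswap : ∀ p, rp (p.2, p.1) = rp p
  /-- the indices `l_p, r_p` are fresh -/
  fresh : ∀ p ∈ Peq, (∀ k, lp p ≠ l k ∧ rp p ≠ l k) ∧ lp p ≠ rp p ∧
    lp p ≠ r7 ∧ rp p ≠ r7
  lpdisj : ∀ p ∈ Peq, ∀ q ∈ Peq, lp p ≠ rp q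
  lrinj : ∀ p ∈ Peq, ∀ q ∈ Peq, (lp p = lp q ∨ rp p = rp q) →
    q = p ∨ q = (p.2, p.1)
  r7l : ∀ k, r7 ≠ l k

variable {s : ℕ}

/-- Rule ①A: `f_1 ∧↑ f_2`. -/
def Friendly.r1A (F : Friendly s) : BRule s :=
  ⟨true, (none, some (F.l 0)), (none, some (F.l 1))⟩
/-- Rule ①B: `f^α_1 ∧↑ f^{η₁}_2`. -/
def Friendly.r1B (F : Friendly s) : BRule s :=
  ⟨true, (some F.α, some (F.l 0)), (some F.η1, some (F.l 1))⟩
/-- Rule ②A: `f^{η₀}_3 ∧↑ f_4`. -/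
def Friendly.r2A (F : Friendly s) : BRule s :=
  ⟨true, (some F.η0, some (F.l 2)), (none, some (F.l 3))⟩
/-- Rule ②B: `f^{β₀}_3 ∧↑ f^{η₁}_4`. -/
def Friendly.r2B (F : Friendly s) : BRule s :=
  ⟨true, (some F.β0, some (F.l 2)), (some F.η1, some (F.l 3))⟩
/-- Rule ③A: `f^{η₁}_5 ∨↑ f_6`. -/
def Friendly.r3A (F : Friendly s) : BRule s :=
  ⟨false, (some F.η1, some (F.l 4)), (none, some (F.l 5))⟩
/-- Rule ③B: `f^{β₁}_5 ∨↑ f^{η₀}_6`. -/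
def Friendly.r3B (F : Friendly s) : BRule s :=
  ⟨false, (some F.β1, some (F.l 4)), (some F.η0, some (F.l 5))⟩

/-- First associated rule for a `Π_=` production `p = {ij, i'j'}`:
`f^i_{l_p} ∧↑ f^j_{r_p}` if `i` is even, `f^i_{l_p} ∨↑ f^j_{r_p}` if `i` is odd. -/
def Friendly.rA (F : Friendly s) (p : (Fin s × Fin s) × (Fin s × Fin s)) : BRule s :=
  ⟨decide (Even ((p.1.1 : ℕ))), (some p.1.1, some (F.lp p)), (some p.1.2, some (F.rp p))⟩

/-- Second associated rule for a `Π_=` production `p = {ij, i'j'}`: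
`f^{i'}_{l_p} ∧↑ f^{j'}_{r_p}` if `i` is even, `∨↑` if `i` is odd. -/
def Friendly.rB (F : Friendly s) (p : (Fin s × Fin s) × (Fin s × Fin s)) : BRule s :=
  ⟨decide (Even ((p.1.1 : ℕ))), (some p.2.1, some (F.lp p)), (some p.2.2, some (F.rp p))⟩

/-- The rewriting set `𝒬₀` (rules ①–⑥). -/
def Friendly.Q0 (F : Friendly s) : Set (BRule s) :=
  {F.r1A, F.r1B, F.r2A, F.r2B, F.r3A, F.r3B} ∪
  {Q | ∃ p ∈ F.Peq, Q = F.rA p ∨ Q = F.rB p}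

/-- Rule ⑦: `f^γ ∨↑ f^{γ'}_r`. -/
def Friendly.rule7 (F : Friendly s) : BRule s :=
  ⟨false, (some F.γ, none), (some F.γ', some F.r7)⟩

/-- The full rewriting set `𝒬 = 𝒬₀ ∪ {⑦}`. -/
def Friendly.Qfull (F : Friendly s) : Set (BRule s) := F.Q0 ∪ {F.rule7}

/-- The association between rules: `①A/①B`, `②A/②B`, `③A/③B` and, for each
`Π_=` production `p`, the two rules for `p`. -/
def Friendly.Assoc (F : Friendly s) : Set (BRule s × BRule s) :=
  {(F.r1A, F.r1B), (F.r1B, F.r1A), (F.r2A, F.r2B), (F.r2B, F.r2A),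
   (F.r3A, F.r3B), (F.r3B, F.r3A)} ∪
  {q | ∃ p ∈ F.Peq, q = (F.rA p, F.rB p) ∨ q = (F.rB p, F.rA p)}

/-- The `Π_=` productions of a friendly system, as pairs of two-letter words. -/
def Friendly.PeqW (F : Friendly s) : Set (List (Fin s) × List (Fin s)) :=
  {q | ∃ p ∈ F.Peq, q = ([p.1.1, p.1.2], [p.2.1, p.2.2])}

/-- The `Π_<` productions `{η₀, β₀η₁}` and `{η₁, β₁η₀}`, as pairs of words
(in both orientations). -/
def Friendly.PltW (F : Friendly s) : Set (List (Fin s) × List (Fin s)) :=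
  {([F.η0], [F.β0, F.η1]), ([F.β0, F.η1], [F.η0]),
   ([F.η1], [F.β1, F.η0]), ([F.β1, F.η0], [F.η1])}

/-- All productions of `Π`, as pairs of words. -/
def Friendly.PiW (F : Friendly s) : Set (List (Fin s) × List (Fin s)) :=
  F.PeqW ∪ F.PltW

/-- One Thue rewriting step: replace an occurrence of `t` by `t'` for a
production `(t, t') ∈ P`. -/
def ThueStep {A : Type*} (P : Set (List A × List A)) (w w' : List A) : Prop :=
  ∃ u v t t', (t, t') ∈ P ∧ w = u ++ t ++ v ∧ w' = u ++ t' ++ v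

/-- `o1, o2` are a married couple created (by rule `f`) at stage `i` of the
fair rewriting sequence `C`. -/
def MarriedBy {V : Type*} {𝒬 : Set (BRule s)} {D0 : Set (Edge s V)}
    (C : SwChase 𝒬 D0) (i : Ordinal.{0}) (f : BRule s) (o1 o2 : Edge s V) : Prop :=
  0 < i ∧ i < C.len ∧ f ∈ 𝒬 ∧
  ∃ e1 e2, SwStepAt f (partUnion C.seq i) e1 e2 o1 o2 (C.seq i)

end Swarm


/-! A rule of wedge type `w` puts its fresh vertex at `endpoint w` of both outputs and copies
their `endpoint (!w)` from the inputs.  Red outputs come from green inputs, which carry no lower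
index, so a married couple carries the two lower indices of its rule `f`.  A later step can attach
a new edge at an existing vertex `b` only through an input having `b` at `endpoint (!w')`, where
`w'` is the wedge type of the later rule.  At the knot that input must be one of the couple, and
matching its lower index forces `w' = f.wedge`, since in `𝒬₀` a lower index is shared only by
two associated rules, which have the same wedge type.  But the knot sits at `endpoint f.wedge`
of the couple, never at `endpoint (!f.wedge)`. -/

namespace Swarm

variable {s : ℕ} {V : Type*}

/-- `endpoint false` is the tail, `endpoint true` the antenna. -/
def endpoint (c : Bool) (e : Edge s V) : V := if c then e.2.2 else e.2.1

lemma exists_endpoint_eq_iff {e : Edge s V} {v : V} :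
    (∃ c, endpoint c e = v) ↔ e.2.1 = v ∨ e.2.2 = v := by
  simp [endpoint]

lemma endpoint_mem_verts {D : Set (Edge s V)} {e : Edge s V} (he : e ∈ D) (c : Bool) :
    endpoint c e ∈ verts D :=
  ⟨e, he, by cases c <;> simp [endpoint]⟩

def BRule.lowerIndices (Q : BRule s) : Set (Fin s) := {x | Q.f.2 = some x ∨ Q.f'.2 = some x}

def LowerIndexed (𝒬 : Set (BRule s)) : Prop := ∀ Q ∈ 𝒬, Q.f.2.isSome ∧ Q.f'.2.isSome

def LowerIndexDeterminesWedge (𝒬 : Set (BRule s)) : Prop :=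
  ∀ Q ∈ 𝒬, ∀ Q' ∈ 𝒬, ∀ x ∈ Q.lowerIndices, x ∈ Q'.lowerIndices → Q.wedge = Q'.wedge

lemma LabStep.color_eq {IJ : Option (Fin s) × Option (Fin s)} {p p' : ISp s}
    (h : LabStep IJ p p') : p'.1 = !p.1 := by
  rw [h.2.2]

lemma LabStep.lower_eq_of_red {IJ : Option (Fin s) × Option (Fin s)} {p p' : ISp s}
    (h : LabStep IJ p p') (hp : p.1 = true ↔ p.2.2 = none) (hred : p'.1 = false) :
    p'.2.2 = IJ.2 := by
  have hgreen : p.1 = true := by simpa [h.color_eq] using hred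
  rw [h.2.2, hp.mp hgreen]
  rfl

lemma LabStep.green_iff_lower_none {IJ : Option (Fin s) × Option (Fin s)} {p p' : ISp s}
    (hIJ : IJ.2.isSome) (h : LabStep IJ p p') (hp : p.1 = true ↔ p.2.2 = none) :
    p'.1 = true ↔ p'.2.2 = none := by
  obtain ⟨x, hx⟩ := Option.isSome_iff_exists.mp hIJ
  obtain ⟨-, -, rfl⟩ := h
  revert hp
  obtain ⟨c, -, l⟩ := p
  cases c <;> cases l <;> simp [odiff, hx]

lemma mem_lowerIndices_of_labStep {Q : BRule s} {p p' : ISp s} {x : Fin s}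
    (h : LabStep Q.f p p' ∨ LabStep Q.f' p p') (hx : p.2.2 = some x) : x ∈ Q.lowerIndices := by
  rcases h with h | h
  exacts [Or.inl (h.2.1 x hx), Or.inr (h.2.1 x hx)]

section SwStepAt

variable {Q : BRule s} {D D' : Set (Edge s V)} {e1 e2 o1 o2 : Edge s V}

lemma SwStepAt.color_eq (h : SwStepAt Q D e1 e2 o1 o2 D') : o2.1.1 = o1.1.1 := by
  rw [h.2.2.2.2.1.color_eq, h.2.2.2.1.color_eq, h.2.2.1]

lemma SwStepAt.lower_eq_of_red (h : SwStepAt Q D e1 e2 o1 o2 D')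
    (hD : ∀ e ∈ D, e.1.1 = true ↔ e.1.2.2 = none) (hred : o1.1.1 = false) :
    o1.1.2.2 = Q.f.2 ∧ o2.1.2.2 = Q.f'.2 := by
  have hred2 : o2.1.1 = false := h.color_eq ▸ hred
  obtain ⟨he1, he2, -, hL1, hL2, -⟩ := h
  exact ⟨hL1.lower_eq_of_red (hD e1 he1) hred, hL2.lower_eq_of_red (hD e2 he2) hred2⟩

lemma SwStepAt.endpoint_wedge_eq (h : SwStepAt Q D e1 e2 o1 o2 D') :
    endpoint Q.wedge o2 = endpoint Q.wedge o1 := by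
  obtain ⟨-, -, -, -, -, hshape, -⟩ := h
  cases hw : Q.wedge <;> simp only [hw, endpoint] at hshape ⊢ <;> exact hshape.2.2.2.1.symm

lemma SwStepAt.endpoint_wedge_not_mem (h : SwStepAt Q D e1 e2 o1 o2 D') {o : Edge s V}
    (ho : o = o1 ∨ o = o2) : endpoint Q.wedge o ∉ verts D := by
  have hfresh : endpoint Q.wedge o1 ∉ verts D := by
    obtain ⟨-, -, -, -, -, hshape, -⟩ := h
    cases hw : Q.wedge <;> simp only [hw, endpoint] at hshape ⊢ <;> exact hshape.2.2.2.2.1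
  rcases ho with rfl | rfl
  · exact hfresh
  · rwa [h.endpoint_wedge_eq]

lemma SwStepAt.exists_parent (h : SwStepAt Q D e1 e2 o1 o2 D') {o : Edge s V}
    (ho : o = o1 ∨ o = o2) :
    ∃ d ∈ D, (LabStep Q.f d.1 o.1 ∨ LabStep Q.f' d.1 o.1) ∧
      endpoint (!Q.wedge) o = endpoint (!Q.wedge) d := by
  obtain ⟨he1, he2, -, hL1, hL2, hshape, -⟩ := h
  have hkept : endpoint (!Q.wedge) o1 = endpoint (!Q.wedge) e1 ∧
      endpoint (!Q.wedge) o2 = endpoint (!Q.wedge) e2 := by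
    cases hw : Q.wedge <;> simp only [hw, endpoint] at hshape ⊢ <;>
      exact ⟨hshape.2.1, hshape.2.2.1⟩
  rcases ho with rfl | rfl
  exacts [⟨e1, he1, Or.inl hL1, hkept.1⟩, ⟨e2, he2, Or.inr hL2, hkept.2⟩]

lemma SwStepAt.exists_parent_of_mem_verts (h : SwStepAt Q D e1 e2 o1 o2 D') {o : Edge s V}
    (ho : o = o1 ∨ o = o2) {v : V} (hv : v ∈ verts D) {c : Bool} (hc : endpoint c o = v) :
    ∃ d ∈ D, (LabStep Q.f d.1 o.1 ∨ LabStep Q.f' d.1 o.1) ∧ endpoint (!Q.wedge) d = v := by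
  have hc' : c = !Q.wedge :=
    Bool.eq_not_iff.mpr fun hcQ => h.endpoint_wedge_not_mem ho (hcQ ▸ hc ▸ hv)
  obtain ⟨d, hd, hdL, hkept⟩ := h.exists_parent ho
  exact ⟨d, hd, hdL, hkept ▸ hc' ▸ hc⟩

lemma SwStepAt.endpoint_not_wedge_mem (h : SwStepAt Q D e1 e2 o1 o2 D') {o : Edge s V}
    (ho : o = o1 ∨ o = o2) : endpoint (!Q.wedge) o ∈ verts D := by
  obtain ⟨d, hd, -, hkept⟩ := h.exists_parent ho
  exact hkept ▸ endpoint_mem_verts hd _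

lemma SwStepAt.mem_iff (h : SwStepAt Q D e1 e2 o1 o2 D') {e : Edge s V} :
    e ∈ D' ↔ e ∈ D ∨ e = o1 ∨ e = o2 := by
  rw [h.2.2.2.2.2.2]
  simp only [Set.mem_union, Set.mem_insert_iff, Set.mem_singleton_iff]

end SwStepAt

lemma mem_partUnion {X : Type*} {seq : Ordinal.{0} → Set X} {i : Ordinal.{0}} {x : X} :
    x ∈ partUnion seq i ↔ ∃ j < i, x ∈ seq j := by
  simp [partUnion]

section SwChase

variable {𝒬 : Set (BRule s)} {D0 : Set (Edge s V)}

theorem SwChase.edge_induction (C : SwChase 𝒬 D0) {P : Edge s V → Prop}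
    (h0 : ∀ e ∈ D0, P e)
    (hstep : ∀ j, 0 < j → j < C.len → (∀ e ∈ partUnion C.seq j, P e) →
      ∀ Q ∈ 𝒬, ∀ e1 e2 o1 o2, SwStepAt Q (partUnion C.seq j) e1 e2 o1 o2 (C.seq j) →
        P o1 ∧ P o2) :
    ∀ j ≤ C.len, ∀ e ∈ partUnion C.seq j, P e := by
  suffices hseq : ∀ j < C.len, ∀ e ∈ C.seq j, P e by
    intro j hj e he
    obtain ⟨k, hk, hek⟩ := mem_partUnion.mp he
    exact hseq k (hk.trans_le hj) e hek
  intro j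
  induction j using WellFoundedLT.induction with
  | _ j IH =>
  intro hj e he
  rcases eq_zero_or_pos j with rfl | hj0
  · exact h0 e (C.init ▸ he)
  have hbelow : ∀ e ∈ partUnion C.seq j, P e := fun e he' => by
    obtain ⟨k, hk, hek⟩ := mem_partUnion.mp he'
    exact IH k hk (hk.trans hj) e hek
  obtain ⟨⟨Q, d1, d2⟩, hQ, n1, n2, hst⟩ := C.step j hj0 hj
  have hnew := hstep j hj0 hj hbelow Q hQ.1 d1 d2 n1 n2 hst
  rcases hst.mem_iff.mp he with he | rfl | rfl
  exacts [hbelow e he, hnew.1, hnew.2]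

theorem SwChase.green_iff_lower_none (h𝒬 : LowerIndexed 𝒬) {s0 t0 : V}
    (C : SwChase 𝒬 (D0green s s0 t0)) :
    ∀ j ≤ C.len, ∀ e ∈ partUnion C.seq j, e.1.1 = true ↔ e.1.2.2 = none := by
  refine C.edge_induction (fun e he => by rw [he]; simp) ?_
  intro j _ _ IH Q hQ e1 e2 o1 o2 hstep
  obtain ⟨he1, he2, -, hL1, hL2, -⟩ := hstep
  exact ⟨hL1.green_iff_lower_none (h𝒬 Q hQ).1 (IH e1 he1),
    hL2.green_iff_lower_none (h𝒬 Q hQ).2 (IH e2 he2)⟩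

theorem SwChase.eq_or_eq_of_endpoint_eq_knot (C : SwChase 𝒬 D0)
    (h𝒬 : LowerIndexDeterminesWedge 𝒬) {i : Ordinal.{0}} {f : BRule s} {o1 o2 : Edge s V}
    (hmar : MarriedBy C i f o1 o2)
    (hlow : ∀ o, o = o1 ∨ o = o2 → ∃ x ∈ f.lowerIndices, o.1.2.2 = some x) :
    ∀ e ∈ C.result, ∀ c, endpoint c e = endpoint f.wedge o1 → e = o1 ∨ e = o2 := by
  obtain ⟨hi0, hiL, hf, e1, e2, hmarried⟩ := hmar
  set b := endpoint f.wedge o1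
  have hb : b ∉ verts (partUnion C.seq i) := hmarried.endpoint_wedge_not_mem (Or.inl rfl)
  have hold : ∀ e ∈ partUnion C.seq i, ∀ c, endpoint c e ≠ b := fun e he c hc =>
    hb (hc ▸ endpoint_mem_verts he c)
  refine C.edge_induction (P := fun e => ∀ c, endpoint c e = b → e = o1 ∨ e = o2)
    (fun e he c hc => (hold e (mem_partUnion.mpr ⟨0, hi0, by rwa [C.init]⟩) c hc).elim)
    ?_ C.len le_rfl
  intro j _ _ IH Q hQ d1 d2 n1 n2 hstep
  suffices hnew : ∀ n, n = n1 ∨ n = n2 → ∀ c, endpoint c n = b → n = o1 ∨ n = o2 from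
    ⟨hnew n1 (Or.inl rfl), hnew n2 (Or.inr rfl)⟩
  intro n hn c hc
  rcases le_or_gt j i with hji | hij
  · have hnD : n ∈ partUnion C.seq i ∨ n = o1 ∨ n = o2 := by
      have hnj : n ∈ C.seq j := hstep.mem_iff.mpr (Or.inr hn)
      rcases hji.lt_or_eq with hji | rfl
      · exact Or.inl (mem_partUnion.mpr ⟨j, hji, hnj⟩)
      · exact hmarried.mem_iff.mp hnj
    exact hnD.resolve_left fun hnD => hold n hnD c hc
  · exfalso
    have ho1 : o1 ∈ partUnion C.seq j :=
      mem_partUnion.mpr ⟨i, hij, hmarried.mem_iff.mpr (Or.inr (Or.inl rfl))⟩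
    obtain ⟨d, hd, hdL, hdb⟩ := hstep.exists_parent_of_mem_verts hn (endpoint_mem_verts ho1 _) hc
    have hdo := IH d hd _ hdb
    obtain ⟨x, hxf, hx⟩ := hlow d hdo
    have hwedge : f.wedge = Q.wedge := h𝒬 f hf Q hQ x hxf (mem_lowerIndices_of_labStep hdL hx)
    have hdi := hmarried.endpoint_not_wedge_mem hdo
    rw [hwedge, hdb] at hdi
    exact hb hdi

theorem SwChase.touching_knot_eq (C : SwChase 𝒬 D0)
    (h𝒬 : LowerIndexDeterminesWedge 𝒬) {i : Ordinal.{0}} {f : BRule s} {o1 o2 : Edge s V}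
    (hmar : MarriedBy C i f o1 o2)
    (hlow : ∀ o, o = o1 ∨ o = o2 → ∃ x ∈ f.lowerIndices, o.1.2.2 = some x) :
    {e ∈ C.result | e.2.1 = endpoint f.wedge o1 ∨ e.2.2 = endpoint f.wedge o1} = {o1, o2} := by
  obtain ⟨-, hiL, -, e1, e2, hmarried⟩ := id hmar
  ext e
  simp only [Set.mem_sep_iff, Set.mem_insert_iff, Set.mem_singleton_iff,
    ← exists_endpoint_eq_iff]
  constructor
  · rintro ⟨he, c, hc⟩
    exact C.eq_or_eq_of_endpoint_eq_knot h𝒬 hmar hlow e he c hc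
  · intro he
    refine ⟨mem_partUnion.mpr ⟨i, hiL, hmarried.mem_iff.mpr (Or.inr he)⟩, f.wedge, ?_⟩
    rcases he with rfl | rfl
    exacts [rfl, hmarried.endpoint_wedge_eq]

end SwChase

section Friendly

variable (F : Friendly s)

lemma Friendly.mem_Q0_iff {Q : BRule s} :
    Q ∈ F.Q0 ↔ (Q = F.r1A ∨ Q = F.r1B ∨ Q = F.r2A ∨ Q = F.r2B ∨ Q = F.r3A ∨ Q = F.r3B)
      ∨ ∃ p ∈ F.Peq, Q = F.rA p ∨ Q = F.rB p := by
  simp [Friendly.Q0]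

lemma Friendly.lowerIndexed : LowerIndexed F.Q0 := by
  intro Q hQ
  rcases (F.mem_Q0_iff).mp hQ with (rfl | rfl | rfl | rfl | rfl | rfl) | ⟨p, -, rfl | rfl⟩ <;>
    exact ⟨rfl, rfl⟩

lemma Friendly.lower_ne {Q : BRule s} (hQ : Q ∈ F.Q0) : Q.f.2 ≠ Q.f'.2 := by
  rcases (F.mem_Q0_iff).mp hQ with (rfl | rfl | rfl | rfl | rfl | rfl) | ⟨p, hp, rfl | rfl⟩ <;>
    simp only [Friendly.r1A, Friendly.r1B, Friendly.r2A, Friendly.r2B, Friendly.r3A,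
      Friendly.r3B, Friendly.rA, Friendly.rB, ne_eq, Option.some.injEq] <;>
    first
      | exact fun h => absurd (F.linj h) (by decide)
      | exact (F.fresh p hp).2.1

lemma Friendly.lowerIndices_cases {Q : BRule s} (hQ : Q ∈ F.Q0) {x : Fin s}
    (hx : x ∈ Q.lowerIndices) :
    (∃ k : Fin 6, x = F.l k ∧ Q.wedge = decide ((k : ℕ) < 4)) ∨
    ∃ p ∈ F.Peq, (x = F.lp p ∨ x = F.rp p) ∧ Q.wedge = decide (Even (p.1.1 : ℕ)) := by
  rcases (F.mem_Q0_iff).mp hQ with (rfl | rfl | rfl | rfl | rfl | rfl) | ⟨p, hp, rfl | rfl⟩ <;>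
    rcases hx with hx | hx <;> cases hx
  all_goals first
    | exact Or.inl ⟨_, rfl, rfl⟩
    | exact Or.inr ⟨p, hp, Or.inl rfl, rfl⟩
    | exact Or.inr ⟨p, hp, Or.inr rfl, rfl⟩

lemma Friendly.even_fst_iff_even_snd {p : (Fin s × Fin s) × (Fin s × Fin s)}
    (hp : p ∈ F.Peq) : Even (p.1.1 : ℕ) ↔ Even (p.2.1 : ℕ) := by
  rcases F.parity p hp with ⟨h1, h2, -⟩ | ⟨h1, h2, -⟩
  · exact iff_of_false (Nat.not_even_iff_odd.mpr h1) (Nat.not_even_iff_odd.mpr h2)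
  · exact iff_of_true h1 h2

lemma Friendly.lowerIndexDeterminesWedge : LowerIndexDeterminesWedge F.Q0 := by
  intro Q hQ Q' hQ' x hx hx'
  rcases F.lowerIndices_cases hQ hx with ⟨k, rfl, hk⟩ | ⟨p, hp, hxp, hpw⟩ <;>
    rcases F.lowerIndices_cases hQ' hx' with ⟨k', hk', hk'w⟩ | ⟨q, hq, hxq, hqw⟩
  · rw [hk, hk'w, F.linj hk']
  · rcases hxq with h | h
    exacts [absurd h.symm ((F.fresh q hq).1 k).1, absurd h.symm ((F.fresh q hq).1 k).2]
  · rcases hxp with h | h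
    exacts [absurd (h.symm.trans hk') ((F.fresh p hp).1 k').1,
      absurd (h.symm.trans hk') ((F.fresh p hp).1 k').2]
  · have hqp : q = p ∨ q = (p.2, p.1) := by
      rcases hxp with h | h <;> rcases hxq with h' | h'
      · exact F.lrinj p hp q hq (Or.inl (h.symm.trans h'))
      · exact absurd (h.symm.trans h') (F.lpdisj p hp q hq)
      · exact absurd (h'.symm.trans h) (F.lpdisj q hq p hp)
      · exact F.lrinj p hp q hq (Or.inr (h.symm.trans h'))
    rcases hqp with rfl | rfl
    · rw [hpw, hqw]
    · rw [hpw, hqw]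
      exact decide_eq_decide.mpr (F.even_fst_iff_even_snd hp)

end Friendly

end Swarm

open Swarm in
theorem knot_degree_two_general {V : Type*} {s : ℕ} (F : Friendly s) (s0 t0 : V)
    (C : SwChase F.Q0 (D0green s s0 t0))
    (i : Ordinal.{0}) (f : BRule s) (o1 o2 : Edge s V)
    (hmar : MarriedBy C i f o1 o2) (hred : o1.1.1 = false) :
    {e ∈ C.result |
        e.2.1 = (if f.wedge then o1.2.2 else o1.2.1) ∨
        e.2.2 = (if f.wedge then o1.2.2 else o1.2.1)}.encard = 2 := by
  obtain ⟨-, hiL, hf, e1, e2, hstep⟩ := id hmar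
  obtain ⟨hlow1, hlow2⟩ :=
    hstep.lower_eq_of_red (C.green_iff_lower_none F.lowerIndexed i hiL.le) hred
  have hlow : ∀ o, o = o1 ∨ o = o2 → ∃ x ∈ f.lowerIndices, o.1.2.2 = some x := by
    obtain ⟨x1, hx1⟩ := Option.isSome_iff_exists.mp (F.lowerIndexed f hf).1
    obtain ⟨x2, hx2⟩ := Option.isSome_iff_exists.mp (F.lowerIndexed f hf).2
    rintro o (rfl | rfl)
    exacts [⟨x1, Or.inl hx1, hlow1.trans hx1⟩, ⟨x2, Or.inr hx2, hlow2.trans hx2⟩]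
  have hne : o1 ≠ o2 := fun h => F.lower_ne hf (by rw [← hlow1, ← hlow2, h])
  calc _ = ({o1, o2} : Set (Edge s V)).encard :=
        congrArg Set.encard (C.touching_knot_eq F.lowerIndexDeterminesWedge hmar hlow)
    _ = 2 := Set.encard_pair hne

open Swarm in
/-- **Knots have degree 2.**  In `C^{𝒬₀} = chase(𝒬₀, D_green)` for
`𝒬₀` built from a friendly Thue system, if two red edges form a married couple
(created in the same rewriting step, by rule `f`), then their knot (the fresh
shared vertex) has degree exactly 2 in `C^{𝒬₀}`. -/
theorem knot_degree_two {V : Type*} {s : ℕ} (F : Friendly s) (s0 t0 : V)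
    (hne : s0 ≠ t0) (C : SwChase F.Q0 (D0green s s0 t0))
    (i : Ordinal.{0}) (f : BRule s) (o1 o2 : Edge s V)
    (hmar : MarriedBy C i f o1 o2) (hred : o1.1.1 = false) :
    {e ∈ C.result |
        e.2.1 = (if f.wedge then o1.2.2 else o1.2.1) ∨
        e.2.2 = (if f.wedge then o1.2.2 else o1.2.1)}.encard = 2 :=
  knot_degree_two_general F s0 t0 C i f o1 o2 hmar hred
end

section
/- (No children out of wedlock) Let Q₀ be the rewriting set built from a friendly Thue system, with each lower index occurring in exactly two associated rules. If H(S,a,b) is one red edge of a married couple in some stage C_n of chase(Q₀, D_green), created by executing rule f ∈ Q₀, then the only rewriting in any later stage that can use H(S,a,b) as part of its input has the other input equal to its spouse and uses the rule g associated with f. -/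
namespace Swarm
variable {s : ℕ}

lemma Friendly.rA_swap (F : Friendly s) {p} (hp : p ∈ F.Peq) : F.rA (p.2, p.1) = F.rB p := by
  unfold Friendly.rA Friendly.rB
  rw [F.lpswap, F.rpswap]
  rcases F.parity p hp with ⟨h1, h2, _⟩ | ⟨h1, h2, _⟩ <;>
    simp [Nat.not_even_iff_odd.mpr, h1, h2]

lemma Friendly.rB_swap (F : Friendly s) {p} (hp : p ∈ F.Peq) : F.rB (p.2, p.1) = F.rA p := by
  unfold Friendly.rA Friendly.rB
  rw [F.lpswap, F.rpswap]
  rcases F.parity p hp with ⟨h1, h2, _⟩ | ⟨h1, h2, _⟩ <;>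
    simp [Nat.not_even_iff_odd.mpr, h1, h2]

set_option maxHeartbeats 2000000 in
lemma Friendly.pairing (F : Friendly s) {f g : BRule s} (hf : f ∈ F.Q0) (hg : g ∈ F.Q0) :
    (g.f.2 = f.f.2 → g.wedge = f.wedge ∧ (g = f ∨ (f, g) ∈ F.Assoc)) ∧
    g.f'.2 ≠ f.f.2 ∧ g.f.2 ≠ f.f'.2 ∧
    (g.f'.2 = f.f'.2 → g.wedge = f.wedge ∧ (g = f ∨ (f, g) ∈ F.Assoc)) := by
  simp only [Friendly.Q0, Set.mem_union, Set.mem_insert_iff, Set.mem_singleton_iff,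
    Set.mem_setOf_eq] at hf hg
  rcases hf with ((rfl|rfl|rfl|rfl|rfl|rfl)|⟨p,hp,(rfl|rfl)⟩) <;>
    rcases hg with ((rfl|rfl|rfl|rfl|rfl|rfl)|⟨q,hq,(rfl|rfl)⟩) <;>
  try (· simp (config := { decide := true }) only [Friendly.r1A, Friendly.r1B, Friendly.r2A,
      Friendly.r2B, Friendly.r3A, Friendly.r3B, Friendly.Assoc, F.linj.eq_iff,
      Prod.mk.injEq, BRule.mk.injEq, Set.mem_union, Set.mem_insert_iff,
      Set.mem_singleton_iff, Set.mem_setOf_eq, Option.some.injEq, ne_eq,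
      not_false_eq_true, and_true, true_and, and_self, or_true, true_or,
      implies_true, IsEmpty.forall_iff, not_true, not_false_iff, false_or, or_false])
  all_goals try (
    · first
      | (have h1 : ∀ k, F.lp q ≠ F.l k := fun k => ((F.fresh q hq).1 k).1
         have h2 : ∀ k, F.rp q ≠ F.l k := fun k => ((F.fresh q hq).1 k).2
         simp [Friendly.rA, Friendly.rB, Friendly.r1A, Friendly.r1B, Friendly.r2A,
           Friendly.r2B, Friendly.r3A, Friendly.r3B, h1, h2])
      | (have h1 : ∀ k, F.l k ≠ F.lp p := fun k => (((F.fresh p hp).1 k).1).symm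
         have h2 : ∀ k, F.l k ≠ F.rp p := fun k => (((F.fresh p hp).1 k).2).symm
         simp [Friendly.rA, Friendly.rB, Friendly.r1A, Friendly.r1B, Friendly.r2A,
           Friendly.r2B, Friendly.r3A, Friendly.r3B, h1, h2]))
  all_goals (
    have hAB : (F.rA p, F.rB p) ∈ F.Assoc := Or.inr ⟨p, hp, Or.inl rfl⟩
    have hBA : (F.rB p, F.rA p) ∈ F.Assoc := Or.inr ⟨p, hp, Or.inr rfl⟩
    refine ⟨fun h => ?_, fun h => ?_, fun h => ?_, fun h => ?_⟩ <;>
      simp only [Friendly.rA, Friendly.rB, Option.some.injEq] at h <;>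
      first
        | exact F.lpdisj p hp q hq h.symm
        | exact F.lpdisj q hq p hp h
        | (rcases F.lrinj p hp q hq (by first | exact Or.inl h.symm | exact Or.inr h.symm) with rfl | rfl <;>
            first
              | exact ⟨rfl, Or.inl rfl⟩
              | exact ⟨rfl, Or.inr hAB⟩
              | exact ⟨rfl, Or.inr hBA⟩
              | (rw [F.rA_swap hp]
                 first
                   | exact ⟨rfl, Or.inl rfl⟩
                   | exact ⟨rfl, Or.inr hAB⟩
                   | exact ⟨rfl, Or.inr hBA⟩)
              | (rw [F.rB_swap hp]
                 first
                   | exact ⟨rfl, Or.inl rfl⟩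
                   | exact ⟨rfl, Or.inr hAB⟩
                   | exact ⟨rfl, Or.inr hBA⟩))
  )

end Swarm
namespace Swarm
variable {s : ℕ} {V : Type*}

lemma odiff_odiff {x I : Option (Fin s)} (h : osub x I) : odiff I (odiff I x) = x := by
  cases x with
  | none => cases I <;> rfl
  | some a => exact h a rfl

lemma labstep_invol {IJ : Option (Fin s) × Option (Fin s)} {p p' p'' : ISp s}
    (h1 : LabStep IJ p p') (h2 : LabStep IJ p' p'') : p'' = p := by
  obtain ⟨a1, a2, a3⟩ := h1
  obtain ⟨-, -, b3⟩ := h2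
  rw [b3, a3]
  simp [Bool.not_not, odiff_odiff a1, odiff_odiff a2]

lemma q0_lower (F : Friendly s) {g : BRule s} (hg : g ∈ F.Q0) :
    (∃ a, g.f.2 = some a) ∧ (∃ b, g.f'.2 = some b) := by
  simp only [Friendly.Q0, Set.mem_union, Set.mem_insert_iff, Set.mem_singleton_iff,
    Set.mem_setOf_eq] at hg
  rcases hg with ((rfl|rfl|rfl|rfl|rfl|rfl)|⟨p,hp,(rfl|rfl)⟩) <;>
    exact ⟨⟨_, rfl⟩, ⟨_, rfl⟩⟩

lemma partUnion_mono {X : Type*} {seq : Ordinal.{0} → Set X} {i m : Ordinal.{0}} (h : i ≤ m) :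
    partUnion seq i ⊆ partUnion seq m := by
  intro x hx
  obtain ⟨j, hj, hx⟩ := mem_partUnion.mp hx
  exact mem_partUnion.mpr ⟨j, hj.trans_le h, hx⟩

lemma seq_subset_partUnion {X : Type*} {seq : Ordinal.{0} → Set X} {j m : Ordinal.{0}}
    (h : j < m) : seq j ⊆ partUnion seq m :=
  fun _ hx => mem_partUnion.mpr ⟨j, h, hx⟩

lemma ite_t {A B : Prop} {b : Bool} (h : b = true) (hi : if b = true then A else B) : A := by
  rw [h] at hi; simpa using hi

lemma ite_f {A B : Prop} {b : Bool} (h : b = false) (hi : if b = true then A else B) : B := by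
  rw [h] at hi; simpa using hi

lemma green_iff (F : Friendly s) {s0 t0 : V} (C : SwChase F.Q0 (D0green s s0 t0)) :
    ∀ j, j < C.len → ∀ h ∈ C.seq j, (h.1.1 = true ↔ h.1.2.2 = none) := by
  intro j
  induction j using Ordinal.induction with
  | h j IH =>
    intro hj h hh
    rcases eq_or_ne j 0 with rfl | j0
    · rw [C.init] at hh
      simp only [D0green, Set.mem_singleton_iff] at hh
      subst hh; simp
    · obtain ⟨q, hq, u1, u2, hstep⟩ := C.step j (pos_iff_ne_zero.mpr j0) hj
      obtain ⟨hi1, hi2, -, hL1, hL2, -, hD⟩ := hstep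
      have key : ∀ (IJ : Option (Fin s) × Option (Fin s)) (e : Edge s V) (lab : ISp s),
          (∃ a, IJ.2 = some a) → e ∈ partUnion C.seq j → LabStep IJ e.1 lab →
          (lab.1 = true ↔ lab.2.2 = none) := by
        rintro IJ e lab ⟨a, ha⟩ he hL
        obtain ⟨j', hj', he'⟩ := mem_partUnion.mp he
        have hiv := IH j' hj' (hj'.trans hj) e he'
        obtain ⟨-, -, h3⟩ := hL
        rw [h3]
        cases hc : e.1.1 with
        | false =>
          have hne : e.1.2.2 ≠ none := fun hn => by
            rw [hiv.mpr hn] at hc; exact Bool.noConfusion hc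
          obtain ⟨b, hb⟩ := Option.ne_none_iff_exists'.mp hne
          simp [hb, ha, odiff]
        | true => simp [hiv.mp hc, ha, odiff]
      rw [hD] at hh
      rcases hh with hh | hh
      · obtain ⟨j', hj', hh'⟩ := mem_partUnion.mp hh
        exact IH j' hj' (hj'.trans hj) h hh'
      · simp only [Set.mem_insert_iff, Set.mem_singleton_iff] at hh
        rcases hh with rfl | rfl
        · exact key q.1.f q.2.1 _ (q0_lower F hq.1).1 hi1 hL1
        · exact key q.1.f' q.2.2 _ (q0_lower F hq.1).2 hi2 hL2

end Swarm
open Swarm in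
/-- **No children out of wedlock.**  If `o1` is one red edge of a
married couple `(o1, o2)` created at stage `i` of `chase(𝒬₀, D_green)` by rule
`f ∈ 𝒬₀`, then any rewriting at a later stage using `o1` as part of its input has
the spouse `o2` as its other input and uses the rule associated with `f`. -/
theorem no_children_out_of_wedlock {V : Type*} {s : ℕ} (F : Friendly s)
    (s0 t0 : V) (hne : s0 ≠ t0) (C : SwChase F.Q0 (D0green s s0 t0))
    (i : Ordinal.{0}) (f : BRule s) (o1 o2 : Edge s V)
    (hmar : MarriedBy C i f o1 o2) (hred : o1.1.1 = false) :
    ∀ m : Ordinal.{0}, i ≤ m → m < C.len → ∀ g ∈ F.Q0,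
      (∀ e o1' o2', SwStepAt g (partUnion C.seq m) o1 e o1' o2' (C.seq m) →
        e = o2 ∧ (f, g) ∈ F.Assoc) ∧
      (∀ e o1' o2', SwStepAt g (partUnion C.seq m) e o1 o1' o2' (C.seq m) →
        e = o2 ∧ (f, g) ∈ F.Assoc) := by
  obtain ⟨hi0, hilen, hfQ, e1, e2, hst⟩ := hmar
  obtain ⟨he1, he2, hcc, hLa, hLb, hcond, hDi⟩ := hst
  obtain ⟨ha1, ha2, ha3⟩ := hLa
  obtain ⟨hb1, hb2, hb3⟩ := hLb
  have he1g : e1.1.1 = true := by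
    have h := hred; rw [ha3] at h; simpa using h
  have he2g : e2.1.1 = true := hcc ▸ he1g
  have he1n : e1.1.2.2 = none := by
    obtain ⟨j, hj, hm⟩ := mem_partUnion.mp he1
    exact (green_iff F C j (hj.trans hilen) e1 hm).mp he1g
  have he2n : e2.1.2.2 = none := by
    obtain ⟨j, hj, hm⟩ := mem_partUnion.mp he2
    exact (green_iff F C j (hj.trans hilen) e2 hm).mp he2g
  obtain ⟨⟨lf, hlf⟩, ⟨rf, hrf⟩⟩ := q0_lower F hfQ
  have o1low : o1.1.2.2 = f.f.2 := by
    rw [ha3]; show odiff f.f.2 e1.1.2.2 = f.f.2; rw [he1n]; rfl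
  have o2low : o2.1.2.2 = f.f'.2 := by
    rw [hb3]; show odiff f.f'.2 e2.1.2.2 = f.f'.2; rw [he2n]; rfl
  have consume1 : ∀ g ∈ F.Q0, ∀ lab : ISp s, LabStep g.f o1.1 lab →
      g.wedge = f.wedge ∧ (g = f ∨ (f, g) ∈ F.Assoc) := by
    intro g hg lab hL
    exact (F.pairing hfQ hg).1 (by rw [hL.2.1 lf (by rw [o1low, hlf]), hlf])
  have consume1' : ∀ g ∈ F.Q0, ∀ lab : ISp s, ¬ LabStep g.f' o1.1 lab := by
    intro g hg lab hL
    exact (F.pairing hfQ hg).2.1 (by rw [hL.2.1 lf (by rw [o1low, hlf]), hlf])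
  have consume2 : ∀ g ∈ F.Q0, ∀ lab : ISp s, LabStep g.f' o2.1 lab →
      g.wedge = f.wedge ∧ (g = f ∨ (f, g) ∈ F.Assoc) := by
    intro g hg lab hL
    exact (F.pairing hfQ hg).2.2.2 (by rw [hL.2.1 rf (by rw [o2low, hrf]), hrf])
  have consume2' : ∀ g ∈ F.Q0, ∀ lab : ISp s, ¬ LabStep g.f o2.1 lab := by
    intro g hg lab hL
    exact (F.pairing hfQ hg).2.2.1 (by rw [hL.2.1 rf (by rw [o2low, hrf]), hrf])
  have ho1i : o1 ∈ C.seq i := by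
    rw [hDi]; exact Set.mem_union_right _ (Set.mem_insert _ _)
  rcases Or.symm (Bool.eq_false_or_eq_true f.wedge) with hfw | hfw
  · -- f.wedge = false : shared tail; knot is o1.2.1
    obtain ⟨hE, hO1a, hO2a, hOeq, hkfresh, -⟩ := ite_f hfw hcond
    have ht1 : o1.2.2 ≠ o1.2.1 := fun h =>
      hkfresh (by rw [← h, hO1a]; exact ⟨e1, he1, Or.inr rfl⟩)
    have ht2 : o2.2.2 ≠ o1.2.1 := fun h =>
      hkfresh (by rw [← h, hO2a]; exact ⟨e2, he2, Or.inr rfl⟩)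
    have knot : ∀ j, j < C.len → ∀ h ∈ C.seq j, (h.2.1 = o1.2.1 ∨ h.2.2 = o1.2.1) →
        h = o1 ∨ h = o2 := by
      intro j
      induction j using Ordinal.induction with
      | h j IH =>
        intro hj h hh htouch
        rcases lt_trichotomy j i with hji | rfl | hij
        · exact absurd (by
            rcases htouch with ht | ht
            · exact ⟨h, seq_subset_partUnion hji hh, Or.inl ht.symm⟩
            · exact ⟨h, seq_subset_partUnion hji hh, Or.inr ht.symm⟩) hkfresh
        · rw [hDi] at hh
          rcases hh with hh | hh
          · exact absurd (by
              rcases htouch with ht | ht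
              · exact ⟨h, hh, Or.inl ht.symm⟩
              · exact ⟨h, hh, Or.inr ht.symm⟩) hkfresh
          · simpa using hh
        · obtain ⟨q, hq, u1, u2, hstepj⟩ := C.step j (hi0.trans hij) hj
          obtain ⟨hj1, hj2, -, hjL1, hjL2, hjcond, hjD⟩ := hstepj
          rw [hjD] at hh
          rcases hh with hh | hh
          · obtain ⟨j', hj', hm⟩ := mem_partUnion.mp hh
            exact IH j' hj' (hj'.trans hj) h hm htouch
          · exfalso
            have hkin : o1.2.1 ∈ verts (partUnion C.seq j) :=
              ⟨o1, seq_subset_partUnion hij ho1i, Or.inl rfl⟩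
            have hsub : ∀ x ∈ partUnion C.seq j, (x.2.1 = o1.2.1 ∨ x.2.2 = o1.2.1) →
                x = o1 ∨ x = o2 := by
              intro x hx ht
              obtain ⟨j', hj', hm⟩ := mem_partUnion.mp hx
              exact IH j' hj' (hj'.trans hj) x hm ht
            simp only [Set.mem_insert_iff, Set.mem_singleton_iff] at hh
            rcases Or.symm (Bool.eq_false_or_eq_true q.1.wedge) with hqw | hqw
            · -- q.wedge = false : outputs (lab, fresh, old antenna)
              obtain ⟨-, hu1a, hu2a, hueq, hufresh, -⟩ := ite_f hqw hjcond
              rcases hh with rfl | rfl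
              · rcases htouch with ht | ht
                · exact hufresh (by rw [ht]; exact hkin)
                · rcases hsub q.2.1 hj1 (Or.inr (by rw [← hu1a]; exact ht)) with hq1 | hq1
                  · exact ht1 ((hq1 ▸ hu1a).symm.trans ht)
                  · exact ht2 ((hq1 ▸ hu1a).symm.trans ht)
              · rcases htouch with ht | ht
                · exact hufresh (by rw [hueq, ht]; exact hkin)
                · rcases hsub q.2.2 hj2 (Or.inr (by rw [← hu2a]; exact ht)) with hq2 | hq2
                  · exact ht1 ((hq2 ▸ hu2a).symm.trans ht)
                  · exact ht2 ((hq2 ▸ hu2a).symm.trans ht)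
            · -- q.wedge = true : outputs (lab, old tail, fresh)
              obtain ⟨-, hu1t, hu2t, hueq, hufresh, -⟩ := ite_t hqw hjcond
              rcases hh with rfl | rfl
              · rcases htouch with ht | ht
                · rcases hsub q.2.1 hj1 (Or.inl (by rw [← hu1t]; exact ht)) with hq1 | hq1
                  · have hwq := (consume1 q.1 hq.1 _ (hq1 ▸ hjL1)).1
                    rw [hqw, hfw] at hwq; exact Bool.noConfusion hwq
                  · exact consume2' q.1 hq.1 _ (hq1 ▸ hjL1)
                · exact hufresh (by rw [ht]; exact hkin)
              · rcases htouch with ht | ht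
                · rcases hsub q.2.2 hj2 (Or.inl (by rw [← hu2t]; exact ht)) with hq2 | hq2
                  · exact consume1' q.1 hq.1 _ (hq2 ▸ hjL2)
                  · have hwq := (consume2 q.1 hq.1 _ (hq2 ▸ hjL2)).1
                    rw [hqw, hfw] at hwq; exact Bool.noConfusion hwq
                · exact hufresh (by rw [hueq, ht]; exact hkin)
    intro m him hmlen g hg
    have hknotm : ∀ x ∈ partUnion C.seq m, (x.2.1 = o1.2.1 ∨ x.2.2 = o1.2.1) →
        x = o1 ∨ x = o2 := by
      intro x hx ht
      obtain ⟨j, hj, hm'⟩ := mem_partUnion.mp hx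
      exact knot j (hj.trans hmlen) x hm' ht
    constructor
    · intro e u1 u2 hstepm
      obtain ⟨-, heD, -, hL1m, hL2m, hcondm, -⟩ := hstepm
      have hwg := consume1 g hg u1.1 hL1m
      obtain ⟨hsh, -, -, -, -, hnw⟩ := ite_f (hwg.1.trans hfw) hcondm
      have heo2 : e = o2 := by
        rcases hknotm e heD (Or.inl hsh.symm) with rfl | rfl
        · exact absurd hL2m (consume1' g hg u2.1)
        · rfl
      subst heo2
      refine ⟨rfl, ?_⟩
      rcases hwg.2 with rfl | hA
      · exact absurd
          ⟨e1.2.1, by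
              rw [labstep_invol ⟨ha1, ha2, ha3⟩ hL1m, hO1a]
              exact partUnion_mono him he1,
            by
              rw [labstep_invol ⟨hb1, hb2, hb3⟩ hL2m, hO2a, hE]
              exact partUnion_mono him he2⟩ hnw
      · exact hA
    · intro e u1 u2 hstepm
      exact absurd hstepm.2.2.2.2.1 (consume1' g hg u2.1)
  · -- f.wedge = true : shared antenna; knot is o1.2.2
    obtain ⟨hE, hO1t, hO2t, hOeq, hkfresh, -⟩ := ite_t hfw hcond
    have ht1 : o1.2.1 ≠ o1.2.2 := fun h =>
      hkfresh (by rw [← h, hO1t]; exact ⟨e1, he1, Or.inl rfl⟩)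
    have ht2 : o2.2.1 ≠ o1.2.2 := fun h =>
      hkfresh (by rw [← h, hO2t]; exact ⟨e2, he2, Or.inl rfl⟩)
    have knot : ∀ j, j < C.len → ∀ h ∈ C.seq j, (h.2.1 = o1.2.2 ∨ h.2.2 = o1.2.2) →
        h = o1 ∨ h = o2 := by
      intro j
      induction j using Ordinal.induction with
      | h j IH =>
        intro hj h hh htouch
        rcases lt_trichotomy j i with hji | rfl | hij
        · exact absurd (by
            rcases htouch with ht | ht
            · exact ⟨h, seq_subset_partUnion hji hh, Or.inl ht.symm⟩
            · exact ⟨h, seq_subset_partUnion hji hh, Or.inr ht.symm⟩) hkfresh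
        · rw [hDi] at hh
          rcases hh with hh | hh
          · exact absurd (by
              rcases htouch with ht | ht
              · exact ⟨h, hh, Or.inl ht.symm⟩
              · exact ⟨h, hh, Or.inr ht.symm⟩) hkfresh
          · simpa using hh
        · obtain ⟨q, hq, u1, u2, hstepj⟩ := C.step j (hi0.trans hij) hj
          obtain ⟨hj1, hj2, -, hjL1, hjL2, hjcond, hjD⟩ := hstepj
          rw [hjD] at hh
          rcases hh with hh | hh
          · obtain ⟨j', hj', hm⟩ := mem_partUnion.mp hh
            exact IH j' hj' (hj'.trans hj) h hm htouch
          · exfalso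
            have hkin : o1.2.2 ∈ verts (partUnion C.seq j) :=
              ⟨o1, seq_subset_partUnion hij ho1i, Or.inr rfl⟩
            have hsub : ∀ x ∈ partUnion C.seq j, (x.2.1 = o1.2.2 ∨ x.2.2 = o1.2.2) →
                x = o1 ∨ x = o2 := by
              intro x hx ht
              obtain ⟨j', hj', hm⟩ := mem_partUnion.mp hx
              exact IH j' hj' (hj'.trans hj) x hm ht
            simp only [Set.mem_insert_iff, Set.mem_singleton_iff] at hh
            rcases Or.symm (Bool.eq_false_or_eq_true q.1.wedge) with hqw | hqw
            · -- q.wedge = false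
              obtain ⟨-, hu1a, hu2a, hueq, hufresh, -⟩ := ite_f hqw hjcond
              rcases hh with rfl | rfl
              · rcases htouch with ht | ht
                · exact hufresh (by rw [ht]; exact hkin)
                · rcases hsub q.2.1 hj1 (Or.inr (by rw [← hu1a]; exact ht)) with hq1 | hq1
                  · have hwq := (consume1 q.1 hq.1 _ (hq1 ▸ hjL1)).1
                    rw [hqw, hfw] at hwq; exact Bool.noConfusion hwq
                  · exact consume2' q.1 hq.1 _ (hq1 ▸ hjL1)
              · rcases htouch with ht | ht
                · exact hufresh (by rw [hueq, ht]; exact hkin)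
                · rcases hsub q.2.2 hj2 (Or.inr (by rw [← hu2a]; exact ht)) with hq2 | hq2
                  · exact consume1' q.1 hq.1 _ (hq2 ▸ hjL2)
                  · have hwq := (consume2 q.1 hq.1 _ (hq2 ▸ hjL2)).1
                    rw [hqw, hfw] at hwq; exact Bool.noConfusion hwq
            · -- q.wedge = true
              obtain ⟨-, hu1t, hu2t, hueq, hufresh, -⟩ := ite_t hqw hjcond
              rcases hh with rfl | rfl
              · rcases htouch with ht | ht
                · rcases hsub q.2.1 hj1 (Or.inl (by rw [← hu1t]; exact ht)) with hq1 | hq1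
                  · exact ht1 ((hq1 ▸ hu1t).symm.trans ht)
                  · exact ht2 ((hq1 ▸ hu1t).symm.trans ht)
                · exact hufresh (by rw [ht]; exact hkin)
              · rcases htouch with ht | ht
                · rcases hsub q.2.2 hj2 (Or.inl (by rw [← hu2t]; exact ht)) with hq2 | hq2
                  · exact ht1 ((hq2 ▸ hu2t).symm.trans ht)
                  · exact ht2 ((hq2 ▸ hu2t).symm.trans ht)
                · exact hufresh (by rw [hueq, ht]; exact hkin)
    intro m him hmlen g hg
    have hknotm : ∀ x ∈ partUnion C.seq m, (x.2.1 = o1.2.2 ∨ x.2.2 = o1.2.2) →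
        x = o1 ∨ x = o2 := by
      intro x hx ht
      obtain ⟨j, hj, hm'⟩ := mem_partUnion.mp hx
      exact knot j (hj.trans hmlen) x hm' ht
    constructor
    · intro e u1 u2 hstepm
      obtain ⟨-, heD, -, hL1m, hL2m, hcondm, -⟩ := hstepm
      have hwg := consume1 g hg u1.1 hL1m
      obtain ⟨hsh, -, -, -, -, hnw⟩ := ite_t (hwg.1.trans hfw) hcondm
      have heo2 : e = o2 := by
        rcases hknotm e heD (Or.inr hsh.symm) with rfl | rfl
        · exact absurd hL2m (consume1' g hg u2.1)
        · rfl
      subst heo2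
      refine ⟨rfl, ?_⟩
      rcases hwg.2 with rfl | hA
      · exact absurd
          ⟨e1.2.2, by
              rw [labstep_invol ⟨ha1, ha2, ha3⟩ hL1m, hO1t]
              exact partUnion_mono him he1,
            by
              rw [labstep_invol ⟨hb1, hb2, hb3⟩ hL2m, hO2t, hE]
              exact partUnion_mono him he2⟩ hnw
      · exact hA
    · intro e u1 u2 hstepm
      exact absurd hstepm.2.2.2.2.1 (consume1' g hg u2.1)
end
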